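/- Let G be a group acting on a topological space X such that for every g ∈ G the map x ↦ g • x is continuous, let n be a natural number, and let Δ be a subgroup of G × Σₙ. Suppose d : Fin s → Fin n selects exactly one representative from each orbit of the action of p(Δ) on Fin n. Then there is a homeomorphism between the product ∏_{j : Fin s} fixedPoints (π(Δ_{d j})) X (with the product of subspace topologies) and the set fixedPoints Δ (Fin n → X) of Δ-fixed points of Fin n → X (with the subspace topology from the product topology on Fin n → X). -/

import Mathlib

open MulAction

variable {G X : Type*} [Group G] [MulAction G X] {n : ℕ}

/-- The action of `G × Σₙ` on `Fin n → X` by `((g, σ) • f) i = g • f (σ⁻¹ i)`. -/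
instance prodPermMulAction : MulAction (G × Equiv.Perm (Fin n)) (Fin n → X) where
  smul := fun gs f i => gs.1 • f (gs.2⁻¹ i)
  one_smul f := by
    funext i
    show (1 : G) • f ((1 : Equiv.Perm (Fin n))⁻¹ i) = f i
    simp
  mul_smul a b f := by
    funext i
    show (a.1 * b.1) • f ((a.2 * b.2)⁻¹ i) = a.1 • b.1 • f (b.2⁻¹ (a.2⁻¹ i))
    rw [mul_smul, mul_inv_rev, Equiv.Perm.mul_apply]

/-- The stabilizer subgroup `Δᵢ = {δ ∈ Δ : p(δ) i = i}` of a subgroup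
`Δ ≤ G × Σₙ`. -/
def stab (Δ : Subgroup (G × Equiv.Perm (Fin n))) (i : Fin n) :
    Subgroup (G × Equiv.Perm (Fin n)) where
  carrier := {x | x ∈ Δ ∧ x.2 i = i}
  one_mem' := ⟨Δ.one_mem, rfl⟩
  mul_mem' := by
    rintro a b ⟨haΔ, ha⟩ ⟨hbΔ, hb⟩
    exact ⟨Δ.mul_mem haΔ hbΔ, by simp [Equiv.Perm.mul_apply, hb, ha]⟩
  inv_mem' := by
    rintro a ⟨haΔ, ha⟩
    exact ⟨Δ.inv_mem haΔ, by
      show a.2⁻¹ i = i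
      exact Equiv.Perm.inv_eq_iff_eq.mpr ha.symm⟩

theorem fixedPoints_pi_homeomorph [TopologicalSpace X]
    (hcont : ∀ g : G, Continuous fun x : X => g • x)
    {s : ℕ} (Δ : Subgroup (G × Equiv.Perm (Fin n)))
    (d : Fin s → Fin n)
    (hd : ∀ i : Fin n, ∃! j : Fin s,
      d j ∈ MulAction.orbit (Δ.map (MonoidHom.snd G (Equiv.Perm (Fin n)))) i)
    (hinj : Function.Injective d) :
    Nonempty
      ((∀ j : Fin s,
          (fixedPoints ((stab Δ (d j)).map (MonoidHom.fst G (Equiv.Perm (Fin n)))) X)) ≃ₜ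
        (fixedPoints Δ (Fin n → X))) := by
  classical
  set H := Δ.map (MonoidHom.snd G (Equiv.Perm (Fin n))) with hH
  set J : Fin n → Fin s := fun i => (hd i).choose with hJ
  have key : ∀ i : Fin n, ∃ δ : G × Equiv.Perm (Fin n),
      δ ∈ Δ ∧ δ.2 i = d (J i) := by
    intro i
    obtain ⟨⟨σ, hσH⟩, hσi⟩ := (hd i).choose_spec.1
    rw [Subgroup.mem_map] at hσH
    obtain ⟨δ, hδ, hδ2⟩ := hσH
    refine ⟨δ, hδ, ?_⟩
    have h1 : σ i = d (J i) := hσi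
    rw [← hδ2] at h1
    exact h1
  choose δf hδΔ hδ2 using key
  have hJorb : ∀ (i : Fin n) (h : G × Equiv.Perm (Fin n)), h ∈ Δ →
      J (h.2⁻¹ i) = J i := by
    intro i h hh
    refine ((hd i).choose_spec.2 _ ?_)
    refine ⟨⟨(δf (h.2⁻¹ i)).2 * h.2⁻¹, ?_⟩, ?_⟩
    · exact H.mul_mem (Subgroup.mem_map_of_mem _ (hδΔ _))
        (H.inv_mem (Subgroup.mem_map_of_mem _ hh))
    · show ((δf (h.2⁻¹ i)).2 * h.2⁻¹) i = d (J (h.2⁻¹ i))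
      rw [Equiv.Perm.mul_apply]
      exact hδ2 _
  have hJd : ∀ j : Fin s, J (d j) = j :=
    fun j => ((hd (d j)).choose_spec.2 j (MulAction.mem_orbit_self _)).symm
  have mem_to : ∀ (x : ∀ j : Fin s,
      (fixedPoints ((stab Δ (d j)).map (MonoidHom.fst G (Equiv.Perm (Fin n)))) X)),
      (fun i => (δf i).1⁻¹ • (x (J i) : X)) ∈ fixedPoints Δ (Fin n → X) := by
    intro x
    rw [mem_fixedPoints]
    rintro ⟨h, hh⟩
    show h • (fun i => (δf i).1⁻¹ • (x (J i) : X)) = _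
    funext i
    show h.1 • (δf (h.2⁻¹ i)).1⁻¹ • (x (J (h.2⁻¹ i)) : X) = (δf i).1⁻¹ • (x (J i) : X)
    rw [hJorb i h hh]
    have hb : (δf (h.2⁻¹ i)).2⁻¹ (d (J i)) = h.2⁻¹ i := by
      rw [← hJorb i h hh, ← hδ2 (h.2⁻¹ i), ← Equiv.Perm.mul_apply, inv_mul_cancel, Equiv.Perm.one_apply]
    have hcmem : δf i * h * (δf (h.2⁻¹ i))⁻¹ ∈ stab Δ (d (J i)) := by
      refine ⟨Δ.mul_mem (Δ.mul_mem (hδΔ i) hh) (Δ.inv_mem (hδΔ _)), ?_⟩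
      show ((δf i).2 * h.2 * (δf (h.2⁻¹ i)).2⁻¹) (d (J i)) = d (J i)
      rw [Equiv.Perm.mul_apply, Equiv.Perm.mul_apply, hb, Equiv.Perm.inv_def, Equiv.apply_symm_apply]
      exact hδ2 i
    have hfix := (x (J i)).2
      ⟨(δf i * h * (δf (h.2⁻¹ i))⁻¹).1, Subgroup.mem_map_of_mem _ hcmem⟩
    have hfix' : ((δf i).1 * h.1 * (δf (h.2⁻¹ i)).1⁻¹) • (x (J i) : X) = (x (J i) : X) :=
      hfix
    rw [mul_smul, mul_smul] at hfix'
    rw [eq_inv_smul_iff]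
    exact hfix'
  have mem_inv : ∀ (f : fixedPoints Δ (Fin n → X)) (j : Fin s),
      (f : Fin n → X) (d j) ∈
        fixedPoints ((stab Δ (d j)).map (MonoidHom.fst G (Equiv.Perm (Fin n)))) X := by
    intro f j
    rw [mem_fixedPoints]
    rintro ⟨g, hg⟩
    rw [Subgroup.mem_map] at hg
    obtain ⟨δ, ⟨hδΔ', hδfix⟩, rfl⟩ := hg
    have hf : δ • (f : Fin n → X) = (f : Fin n → X) := f.2 ⟨δ, hδΔ'⟩
    have hi : δ.2⁻¹ (d j) = d j := by
      conv_lhs => rw [← hδfix]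
      rw [← Equiv.Perm.mul_apply, inv_mul_cancel, Equiv.Perm.one_apply]
    have := congrFun hf (d j)
    show δ.1 • (f : Fin n → X) (d j) = (f : Fin n → X) (d j)
    calc δ.1 • (f : Fin n → X) (d j) = δ.1 • (f : Fin n → X) (δ.2⁻¹ (d j)) := by rw [hi]
      _ = (f : Fin n → X) (d j) := this
  refine ⟨{
    toFun := fun x => ⟨fun i => (δf i).1⁻¹ • (x (J i) : X), mem_to x⟩
    invFun := fun f j => ⟨(f : Fin n → X) (d j), mem_inv f j⟩
    left_inv := ?_
    right_inv := ?_
    continuous_toFun := ?_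
    continuous_invFun := ?_ }⟩
  · intro x
    funext j
    apply Subtype.ext
    show (δf (d j)).1⁻¹ • (x (J (d j)) : X) = (x j : X)
    rw [hJd j]
    have hmem : δf (d j) ∈ stab Δ (d j) := ⟨hδΔ _, by rw [hδ2, hJd]⟩
    have hfix : (δf (d j)).1 • (x j : X) = (x j : X) :=
      (x j).2 ⟨(δf (d j)).1, Subgroup.mem_map_of_mem _ hmem⟩
    rw [inv_smul_eq_iff]
    exact hfix.symm
  · intro f
    apply Subtype.ext
    funext i
    show (δf i).1⁻¹ • (f : Fin n → X) (d (J i)) = (f : Fin n → X) i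
    have hf : δf i • (f : Fin n → X) = (f : Fin n → X) := f.2 ⟨δf i, hδΔ i⟩
    have hi : (δf i).2⁻¹ (d (J i)) = i := by
      rw [← hδ2 i, ← Equiv.Perm.mul_apply, inv_mul_cancel, Equiv.Perm.one_apply]
    have h3 : (δf i).1 • (f : Fin n → X) ((δf i).2⁻¹ (d (J i))) = (f : Fin n → X) (d (J i)) :=
      congrFun hf (d (J i))
    rw [hi] at h3
    rw [inv_smul_eq_iff]
    exact h3.symm
  · apply Continuous.subtype_mk
    exact continuous_pi fun i =>
      (hcont _).comp (continuous_subtype_val.comp (continuous_apply (J i)))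
  · exact continuous_pi fun j =>
      Continuous.subtype_mk ((continuous_apply (d j)).comp continuous_subtype_val) _
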